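/- arXiv:1906.04973 — 5 statements merged into one kernel-verified Lean document; each statement's English description precedes it below -/
import Mathlib

section
/- Let p(x₁,…,xₘ) = ∑_{σ∈Sₘ} c_σ x_{σ(1)}⋯x_{σ(m)} (c_σ ∈ ℝ) be a multilinear polynomial on the real quaternion algebra ℍ. If Im p contains a nonzero scalar quaternion and also contains a quaternion that is not scalar, then Im p = ℍ. -/
open Quaternion

/-- Evaluation of the multilinear polynomial
`p(x₁,…,xₘ) = ∑_{σ ∈ Sₘ} c_σ x_{σ(1)} ⋯ x_{σ(m)}` on the real quaternions. -/
noncomputable def mlinEval {m : ℕ} (c : Equiv.Perm (Fin m) → ℝ)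
    (x : Fin m → ℍ[ℝ]) : ℍ[ℝ] :=
  ∑ σ : Equiv.Perm (Fin m), c σ • (List.ofFn fun i => x (σ i)).prod

/-! The polynomial is multilinear and commutes with conjugation by nonzero quaternions, so its
image is closed under conjugation.

Suppose that at every point with a nonzero scalar value, changing a single argument keeps the
value scalar. Starting from a point with value `r ≠ 0`, change the arguments one at a time: a
change that would pass through the value `0` is avoided, since the set of arguments in slot `i`
that keep the value nonzero is the complement of a proper subspace, hence spans, and the
non-scalar part of the value is linear in that argument. So every value would be scalar.

Hence some one-slot line `ζ ↦ p(x₁, …, ζ, …, xₘ)`, a real subspace of the image, contains a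
nonzero scalar and a non-scalar, so it contains `ℝ + ℝ v` for a pure quaternion `v ≠ 0`. Pure
quaternions of equal norm have equal squares, and `s² = t²` gives `(s + t) s = t (s + t)`; so
`a + t` with `t` pure is conjugate to `a + b v`, where `b = ± ‖t‖ / ‖v‖`. -/

theorem LinearMap.eq_zero_of_compl_ker_subset_ker {R V W U : Type*} [Ring R]
    [AddCommGroup V] [AddCommGroup W] [AddCommGroup U] [Module R V] [Module R W] [Module R U]
    {ψ : V →ₗ[R] W} {φ : V →ₗ[R] U} (hψ : ψ ≠ 0)
    (h : (LinearMap.ker ψ : Set V)ᶜ ⊆ LinearMap.ker φ) : φ = 0 := by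
  obtain ⟨v₀, hv₀⟩ : ∃ v₀, ψ v₀ ≠ 0 := by simpa [LinearMap.ext_iff] using hψ
  ext v
  by_cases hv : ψ v = 0
  · have hsum : φ (v + v₀) = 0 := h (by simpa [hv] using hv₀)
    have h₀ : φ v₀ = 0 := h hv₀
    simpa [h₀] using hsum
  · exact h hv

namespace MultilinearMap

variable {R ι N : Type*} {M : ι → Type*} [Ring R] [Fintype ι] [DecidableEq ι]
  [∀ i, AddCommGroup (M i)] [AddCommGroup N] [∀ i, Module R (M i)] [Module R N]

theorem apply_mem_of_forall_update_mem (f : MultilinearMap R M N) (S : Submodule R N)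
    (hS : ∀ x i (ζ : M i), f x ≠ 0 → f x ∈ S → f (Function.update x i ζ) ∈ S)
    {y : ∀ i, M i} (hy : f y ≠ 0) (hyS : f y ∈ S) (x : ∀ i, M i) : f x ∈ S := by
  suffices key : ∀ F : Finset ι, ∀ y x, f y ≠ 0 → f y ∈ S → (∀ l ∉ F, x l = y l) → f x ∈ S from
    key Finset.univ y x hy hyS (by simp)
  intro F
  induction F using Finset.induction_on with
  | empty =>
    intro y x _ hyS hxy
    rwa [funext fun l => hxy l (Finset.notMem_empty l)]
  | @insert i F hiF ih =>
    intro y x hy hyS hxy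
    have hzero : S.mkQ ∘ₗ f.toLinearMap x i = 0 := by
      refine LinearMap.eq_zero_of_compl_ker_subset_ker (ψ := f.toLinearMap y i) ?_ ?_
      · intro h
        simpa [Function.update_eq_self, hy] using congrArg (· (y i)) h
      · intro ζ hζ
        simp only [Set.mem_compl_iff, SetLike.mem_coe, LinearMap.mem_ker,
          MultilinearMap.toLinearMap_apply] at hζ
        simp only [SetLike.mem_coe, LinearMap.mem_ker, LinearMap.coe_comp, Function.comp_apply,
          MultilinearMap.toLinearMap_apply, Submodule.mkQ_apply, Submodule.Quotient.mk_eq_zero]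
        refine ih _ _ hζ (hS y i ζ hy hyS) fun l hl => ?_
        rcases eq_or_ne l i with rfl | hli
        · simp
        · simpa [hli] using hxy l (by simp [hli, hl])
    simpa [Function.update_eq_self] using congrArg (· (x i)) hzero

end MultilinearMap

theorem conj_add_eq_of_mul_self_eq {D : Type*} [DivisionRing D] {p q : D} (h : p * p = q * q)
    (hpq : p + q ≠ 0) : (p + q) * p * (p + q)⁻¹ = q := by
  rw [show (p + q) * p = q * (p + q) by noncomm_ring; rw [h]; abel, mul_assoc,
    mul_inv_cancel₀ hpq, mul_one]

namespace Quaternion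

theorem mem_bot_iff {q : ℍ[ℝ]} : q ∈ (⊥ : Subalgebra ℝ ℍ[ℝ]) ↔ ∃ r : ℝ, (r : ℍ[ℝ]) = q :=
  Algebra.mem_bot

theorem conj_coe {u : ℍ[ℝ]} (hu : u ≠ 0) (r : ℝ) : u * r * u⁻¹ = r := by
  rw [← coe_commutes, mul_assoc, mul_inv_cancel₀ hu, mul_one]

theorem exists_conj_smul_eq {p q : ℍ[ℝ]} (hp : p.re = 0) (hp0 : p ≠ 0) (hq : q.re = 0) :
    ∃ b : ℝ, ∃ u ≠ 0, u * (b • p) * u⁻¹ = q := by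
  set b := ‖q‖ / ‖p‖
  by_cases hbpq : b • p + q = 0
  · exact ⟨-b, 1, one_ne_zero, by simp [neg_smul, eq_neg_of_add_eq_zero_right hbpq]⟩
  refine ⟨b, _, hbpq, conj_add_eq_of_mul_self_eq ?_ hbpq⟩
  have hnorm : normSq (b • p) = normSq q := by
    rw [normSq_smul, normSq_eq_norm_mul_self, normSq_eq_norm_mul_self, div_pow]
    field_simp [norm_ne_zero_iff.mpr hp0]
  rw [← sq, ← sq, sq_eq_neg_normSq.mpr (by simp [hp]), sq_eq_neg_normSq.mpr hq, hnorm]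

theorem exists_conj_mem {V : Submodule ℝ ℍ[ℝ]} {s w : ℍ[ℝ]} (hsV : s ∈ V) (hs : s ≠ 0)
    (hsS : s ∈ (⊥ : Subalgebra ℝ ℍ[ℝ])) (hwV : w ∈ V) (hw : w ∉ (⊥ : Subalgebra ℝ ℍ[ℝ]))
    (z : ℍ[ℝ]) : ∃ u ≠ 0, ∃ v ∈ V, u * v * u⁻¹ = z := by
  obtain ⟨r, rfl⟩ := mem_bot_iff.mp hsS
  have hr : r ≠ 0 := fun h => hs (by simp [h])
  have hcoe : ∀ a : ℝ, (a : ℍ[ℝ]) ∈ V := fun a => by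
    have := V.smul_mem (a / r) hsV
    rwa [← coe_mul_eq_smul, ← coe_mul, div_mul_cancel₀ a hr] at this
  have him : w.im ∈ V := by simpa using V.sub_mem hwV (hcoe w.re)
  have him0 : w.im ≠ 0 := fun h => hw (mem_bot_iff.mpr ⟨w.re, by simpa [h] using re_add_im w⟩)
  obtain ⟨b, u, hu, hconj⟩ := exists_conj_smul_eq (re_im w) him0 (re_im z)
  refine ⟨u, hu, z.re + b • w.im, V.add_mem (hcoe _) (V.smul_mem b him), ?_⟩
  rw [mul_add, add_mul, conj_coe hu, hconj, re_add_im]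

end Quaternion

section mlinEval

variable {m : ℕ} (c : Equiv.Perm (Fin m) → ℝ)

noncomputable def mlinEvalMultilinear : MultilinearMap ℝ (fun _ : Fin m => ℍ[ℝ]) ℍ[ℝ] :=
  ∑ σ, c σ • (MultilinearMap.mkPiAlgebraFin ℝ m ℍ[ℝ]).domDomCongr σ

theorem coe_mlinEvalMultilinear : ⇑(mlinEvalMultilinear c) = mlinEval c := by
  ext x : 1
  simp [mlinEvalMultilinear, mlinEval]

theorem mlinEval_comp_algHom (φ : ℍ[ℝ] →ₐ[ℝ] ℍ[ℝ]) (x : Fin m → ℍ[ℝ]) :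
    mlinEval c (φ ∘ x) = φ (mlinEval c x) := by
  simp [mlinEval, map_list_prod, List.map_ofFn, Function.comp_def]

theorem conj_mem_range_mlinEval {u q : ℍ[ℝ]} (hu : u ≠ 0) (hq : q ∈ Set.range (mlinEval c)) :
    u * q * u⁻¹ ∈ Set.range (mlinEval c) := by
  obtain ⟨x, rfl⟩ := hq
  let conj := MulSemiringAction.toAlgEquiv ℝ ℍ[ℝ] (ConjAct.toConjAct (Units.mk0 u hu))
  exact ⟨conj ∘ x, mlinEval_comp_algHom c conj.toAlgHom x⟩

end mlinEval

/-- If the image of a multilinear polynomial on ℍ contains a nonzero scalar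
and a non-scalar quaternion, then the image is all of ℍ. -/
theorem image_multilinear_eq_univ {m : ℕ} (c : Equiv.Perm (Fin m) → ℝ)
    (hscalar : ∃ r : ℝ, r ≠ 0 ∧ (r : ℍ[ℝ]) ∈ Set.range (mlinEval c))
    (hnonscalar : ∃ q ∈ Set.range (mlinEval c), ∀ r : ℝ, q ≠ (r : ℍ[ℝ])) :
    Set.range (mlinEval c) = (Set.univ : Set ℍ[ℝ]) := by
  obtain ⟨r, hr, y, hy⟩ := hscalar
  obtain ⟨_, ⟨xq, rfl⟩, hq⟩ := hnonscalar
  set f := mlinEvalMultilinear c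
  have hf : ⇑f = mlinEval c := coe_mlinEvalMultilinear c
  let S := Subalgebra.toSubmodule (⊥ : Subalgebra ℝ ℍ[ℝ])
  obtain ⟨x, i, ζ, hx0, hxS, hζ⟩ :
      ∃ x i ζ, f x ≠ 0 ∧ f x ∈ S ∧ f (Function.update x i ζ) ∉ S := by
    by_contra! h
    have hy0 : f y ≠ 0 := by rw [hf, hy]; exact coe_injective.ne hr
    have hyS : f y ∈ S := mem_bot_iff.mpr ⟨r, by rw [hf, hy]⟩
    obtain ⟨r', hr'⟩ := mem_bot_iff.mp (f.apply_mem_of_forall_update_mem S h hy0 hyS xq)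
    exact hq r' (by rw [← hf, hr'])
  refine Set.eq_univ_of_forall fun z => ?_
  obtain ⟨u, hu, _, ⟨ξ, rfl⟩, rfl⟩ := exists_conj_mem (V := LinearMap.range (f.toLinearMap x i))
    ⟨x i, by simp⟩ hx0 hxS ⟨ζ, rfl⟩ hζ z
  exact conj_mem_range_mlinEval c hu ⟨_, by rw [← hf]; rfl⟩
end

section
/- Let p(x₁,…,xₘ) = ∑_{σ∈Sₘ} c_σ x_{σ(1)}⋯x_{σ(m)} (c_σ ∈ ℝ) be a multilinear polynomial on the real quaternion algebra ℍ. If every value of p is a vector quaternion (has zero real part) and p is not identically zero on ℍ, then Im p equals the whole set V of vector quaternions. -/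
/-!
The image of `p` is stable under two operations: positive scaling, since
`p(t x) = tᵐ p(x)`, and conjugation, since `x ↦ u x u⁻¹` is an algebra automorphism of `ℍ`.
Conjugation acts transitively on vector quaternions of a given norm: `a + b` conjugates `a`
to `b`, and when `b = -a` any nonzero quaternion anticommuting with `a` does. So one nonzero
value of `p` yields all vector quaternions, provided `m ≥ 1`; for `m = 0` the polynomial is a
real constant, which the hypotheses force to vanish.
-/

open Quaternion

namespace Quaternion

theorem exists_ne_zero_mul_eq_neg_mul {a : ℍ[ℝ]} (ha : a.re = 0) :
    ∃ v : ℍ[ℝ], v ≠ 0 ∧ v * a = -(a * v) := by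
  by_cases hk : a.imI = 0 ∧ a.imJ = 0
  · set v : ℍ[ℝ] := ⟨0, 1, 0, 0⟩ with hv
    refine ⟨v, fun h => by simpa [hv] using congrArg QuaternionAlgebra.imI h, ?_⟩
    ext <;> simp only [re_mul, imI_mul, imJ_mul, imK_mul, re_neg, imI_neg, imJ_neg, imK_neg] <;>
      simp [hv, ha, hk.1, hk.2]
  · set v : ℍ[ℝ] := ⟨0, -a.imJ, a.imI, 0⟩ with hv
    refine ⟨v, fun h => hk ⟨?_, ?_⟩, ?_⟩
    · simpa [hv] using congrArg QuaternionAlgebra.imJ h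
    · simpa [hv] using congrArg QuaternionAlgebra.imI h
    · ext <;> simp only [re_mul, imI_mul, imJ_mul, imK_mul, re_neg, imI_neg, imJ_neg, imK_neg] <;>
        simp [hv, ha] <;> ring

theorem exists_mul_mul_inv_eq_of_normSq_eq {a b : ℍ[ℝ]} (ha : a.re = 0) (hb : b.re = 0)
    (hab : normSq a = normSq b) : ∃ u : ℍ[ℝ], u ≠ 0 ∧ u * a * u⁻¹ = b := by
  suffices ∃ u : ℍ[ℝ], u ≠ 0 ∧ u * a = b * u from
    this.imp fun u ⟨hu, h⟩ => ⟨hu, by rw [h, mul_inv_cancel_right₀ hu]⟩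
  by_cases hsum : a + b = 0
  · obtain ⟨v, hv, hva⟩ := exists_ne_zero_mul_eq_neg_mul ha
    refine ⟨v, hv, ?_⟩
    rw [hva, eq_neg_of_add_eq_zero_right hsum, neg_mul]
  · refine ⟨a + b, hsum, ?_⟩
    have hsq : a * a = b * b := by
      rw [← sq, ← sq, sq_eq_neg_normSq.2 ha, sq_eq_neg_normSq.2 hb, hab]
    rw [add_mul, mul_add, hsq, add_comm]

end Quaternion

section

variable {m : ℕ} (c : Equiv.Perm (Fin m) → ℝ)

theorem mlinEval_map {F : Type*} [FunLike F ℍ[ℝ] ℍ[ℝ]] [AlgHomClass F ℝ ℍ[ℝ] ℍ[ℝ]] (φ : F)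
    (x : Fin m → ℍ[ℝ]) : mlinEval c (fun i => φ (x i)) = φ (mlinEval c x) := by
  simp [mlinEval, map_sum, map_smul, map_list_prod, List.map_ofFn, Function.comp_def]

theorem mlinEval_smul (t : ℝ) (x : Fin m → ℍ[ℝ]) :
    mlinEval c (fun i => t • x i) = t ^ m • mlinEval c x := by
  simp only [mlinEval, Finset.smul_sum, smul_smul, mul_comm (t ^ m)]
  refine Finset.sum_congr rfl fun σ _ => ?_
  have := (MultilinearMap.mkPiAlgebraFin ℝ m ℍ[ℝ]).map_smul_univ (fun _ => t) (x ∘ σ)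
  simp only [MultilinearMap.mkPiAlgebraFin_apply, Finset.prod_const, Finset.card_univ,
    Fintype.card_fin, Function.comp_def] at this
  rw [this, mul_smul]

end

theorem mlinEval_fin_zero (c : Equiv.Perm (Fin 0) → ℝ) (x : Fin 0 → ℍ[ℝ]) :
    mlinEval c x = (∑ σ, c σ) • 1 := by
  simp [mlinEval]

/-- If all values of a multilinear polynomial on ℍ are vector quaternions and
the polynomial is not identically zero, its image is the whole set `V` of
vector quaternions. -/
theorem image_multilinear_eq_vectors {m : ℕ} (c : Equiv.Perm (Fin m) → ℝ)
    (hvec : ∀ x : Fin m → ℍ[ℝ], (mlinEval c x).re = 0)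
    (hne : ∃ x : Fin m → ℍ[ℝ], mlinEval c x ≠ 0) :
    Set.range (mlinEval c) = {q : ℍ[ℝ] | q.re = 0} := by
  obtain ⟨x₀, hx₀⟩ := hne
  have hm : m ≠ 0 := by
    rintro rfl
    have hre := hvec x₀
    rw [mlinEval_fin_zero] at hre hx₀
    simp_all
  refine Set.Subset.antisymm (Set.range_subset_iff.2 hvec) fun q (hq : q.re = 0) => ?_
  set q₀ := mlinEval c x₀
  set t := (‖q‖ / ‖q₀‖) ^ (m⁻¹ : ℝ)
  have ht : t ^ m = ‖q‖ / ‖q₀‖ := Real.rpow_inv_natCast_pow (by positivity) hm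
  have hnorm : normSq (t ^ m • q₀) = normSq q := by
    rw [normSq_eq_norm_mul_self, normSq_eq_norm_mul_self, norm_smul, ht,
      Real.norm_of_nonneg (by positivity), div_mul_cancel₀ _ (norm_ne_zero_iff.2 hx₀)]
  obtain ⟨u, hu, hconj⟩ :=
    exists_mul_mul_inv_eq_of_normSq_eq (by simp [q₀, hvec x₀]) hq hnorm
  let φ := MulSemiringAction.toAlgEquiv ℝ ℍ[ℝ] (ConjAct.toConjAct (Units.mk0 u hu))
  refine ⟨fun i => φ (t • x₀ i), ?_⟩
  rw [mlinEval_map, mlinEval_smul]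
  simpa [φ, ConjAct.units_smul_def] using hconj
end

section
/- The multilinear polynomial p(x₁,x₂,x₃,x₄) = [x₁,x₂][x₃,x₄] + [x₃,x₄][x₁,x₂] (where [x,y] = xy − yx) is a central polynomial of the real quaternion algebra ℍ: every value p(x₁,x₂,x₃,x₄) with xᵢ ∈ ℍ is a scalar quaternion (lies in ℝ·1), and p is not identically zero on ℍ. -/
open Quaternion

/-! Commutators in `ℍ` are pure quaternions, and for pure quaternions `a, b` conjugation gives
`star (a * b) = b * a`, so `a * b + b * a = a * b + star (a * b)` is twice a real part. The value
at `(i, j, i, j)` is `2 [i,j]² ≠ 0` since `ℍ` is a domain of characteristic zero. -/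

namespace Quaternion

variable {R : Type*} [CommRing R]

instance instCharZero [CharZero R] : CharZero ℍ[R] :=
  ⟨fun m n h => by simpa using congrArg QuaternionAlgebra.re h⟩

theorem re_mul_comm (a b : ℍ[R]) : (a * b).re = (b * a).re := by
  simp only [re_mul]; ring

theorem re_mul_sub_mul_eq_zero (a b : ℍ[R]) : (a * b - b * a).re = 0 := by
  rw [re_sub, re_mul_comm, sub_self]

theorem star_eq_neg_of_re_eq_zero {a : ℍ[R]} (ha : a.re = 0) : star a = -a := by
  ext <;> simp [ha]

theorem mul_add_mul_eq_coe_of_re_eq_zero {a b : ℍ[R]} (ha : a.re = 0) (hb : b.re = 0) :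
    a * b + b * a = ((2 * (a * b).re : R) : ℍ[R]) := by
  have hstar : star (a * b) = b * a := by
    rw [star_mul, star_eq_neg_of_re_eq_zero ha, star_eq_neg_of_re_eq_zero hb, neg_mul_neg]
  rw [← hstar, self_add_star']

theorem exists_mul_ne_mul [NeZero (2 : R)] : ∃ x y : ℍ[R], x * y ≠ y * x := by
  let i : ℍ[R] := ⟨0, 1, 0, 0⟩
  let j : ℍ[R] := ⟨0, 0, 1, 0⟩
  have hk : (i * j - j * i).imK = 2 := by
    rw [imK_sub, imK_mul, imK_mul]; simp only [i, j]; ring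
  refine ⟨i, j, fun h => two_ne_zero (α := R) ?_⟩
  rwa [h, sub_self, imK_zero, eq_comm] at hk

end Quaternion

/-- The multilinear polynomial `[x₁,x₂][x₃,x₄] + [x₃,x₄][x₁,x₂]` is a central
polynomial of ℍ: every value is scalar and it is not identically zero. -/
theorem central_polynomial_quaternion :
    (∀ x₁ x₂ x₃ x₄ : ℍ[ℝ], ∃ r : ℝ,
      (x₁ * x₂ - x₂ * x₁) * (x₃ * x₄ - x₄ * x₃) +
        (x₃ * x₄ - x₄ * x₃) * (x₁ * x₂ - x₂ * x₁) = (r : ℍ[ℝ])) ∧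
    (∃ x₁ x₂ x₃ x₄ : ℍ[ℝ],
      (x₁ * x₂ - x₂ * x₁) * (x₃ * x₄ - x₄ * x₃) +
        (x₃ * x₄ - x₄ * x₃) * (x₁ * x₂ - x₂ * x₁) ≠ 0) := by
  refine ⟨fun x₁ x₂ x₃ x₄ => ⟨_, mul_add_mul_eq_coe_of_re_eq_zero
    (re_mul_sub_mul_eq_zero x₁ x₂) (re_mul_sub_mul_eq_zero x₃ x₄)⟩, ?_⟩
  obtain ⟨x, y, hxy⟩ := exists_mul_ne_mul (R := ℝ)
  have hc : x * y - y * x ≠ 0 := sub_ne_zero.2 hxy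
  refine ⟨x, y, x, y, ?_⟩
  rw [← two_mul]
  exact mul_ne_zero two_ne_zero (mul_self_ne_zero.2 hc)
end

section
/- The image of the polynomial p(x₁,x₂) = [x₁,x₂]²·x₁ (where [x₁,x₂] = x₁x₂ − x₂x₁), evaluated on the real quaternion algebra ℍ, consists of all quaternions except the nonzero scalars: Im p = {0} ∪ {q ∈ ℍ : q ∉ ℝ·1}. In particular p(x₁,x₂) = 0 whenever x₁ is scalar, while every non-scalar quaternion is a value of p. -/
open Quaternion

/-! The commutator `c = [x₁, x₂]` has zero real part, so `c² = -|c|²` is real and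
`[x₁, x₂]² x₁ = -|c|² x₁`: this is zero or nonscalar unless `x₁` is real, and then `c = 0`.
Conversely a nonscalar `q` is not central, so `[q, u] ≠ 0` for some `u`; rescaling `u` makes
`|[q, u]| = 1`, and then `[-q, u]² (-q) = -(-q) = q`. -/

namespace Quaternion

section CommRing

variable {R : Type*} [CommRing R]

theorem re_mul_sub_mul (x y : ℍ[R]) : (x * y - y * x).re = 0 := by
  simp only [re_sub, re_mul]
  ring

theorem coe_mul_sub_mul_coe (r : R) (y : ℍ[R]) : (r : ℍ[R]) * y - y * r = 0 := by
  rw [coe_commutes, sub_self]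

theorem forall_ne_coe_iff_ne_re {q : ℍ[R]} : (∀ r : R, q ≠ r) ↔ q ≠ q.re :=
  ⟨fun h => h q.re, fun h _ hr => h (eq_re_of_eq_coe hr)⟩

theorem eq_re_of_forall_mul_comm [NoZeroDivisors R] [CharZero R] {q : ℍ[R]}
    (h : ∀ u : ℍ[R], q * u = u * q) : q = q.re := by
  obtain ⟨i, hi₀, hi₁, hi₂, hi₃⟩ : ∃ i : ℍ[R], i.re = 0 ∧ i.imI = 1 ∧ i.imJ = 0 ∧ i.imK = 0 :=
    ⟨⟨0, 1, 0, 0⟩, rfl, rfl, rfl, rfl⟩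
  obtain ⟨j, hj₀, hj₁, hj₂, hj₃⟩ : ∃ j : ℍ[R], j.re = 0 ∧ j.imI = 0 ∧ j.imJ = 1 ∧ j.imK = 0 :=
    ⟨⟨0, 0, 1, 0⟩, rfl, rfl, rfl, rfl⟩
  have hqi := congrArg (fun x : ℍ[R] => (x.imJ, x.imK)) (h i)
  have hqj := congrArg (fun x : ℍ[R] => x.imK) (h j)
  simp only [imJ_mul, imK_mul, hi₀, hi₁, hi₂, hi₃, hj₀, hj₁, hj₂, hj₃, Prod.mk.injEq] at hqi hqj
  have hI : (2 : R) * q.imI = 0 := by linear_combination hqj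
  have hJ : (2 : R) * q.imJ = 0 := by linear_combination -hqi.2
  have hK : (2 : R) * q.imK = 0 := by linear_combination hqi.1
  ext
  · rfl
  · simpa using hI
  · simpa using hJ
  · simpa using hK

end CommRing

section LinearOrderedField

variable {R : Type*} [Field R] [LinearOrder R] [IsStrictOrderedRing R]

theorem mul_sub_mul_sq_eq_neg_normSq (x y : ℍ[R]) :
    (x * y - y * x) ^ 2 = -((normSq (x * y - y * x) : R) : ℍ[R]) :=
  sq_eq_neg_normSq.2 (re_mul_sub_mul x y)

theorem mul_sub_mul_sq_mul_eq_zero_or_ne_re (x₁ x₂ : ℍ[R]) :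
    (x₁ * x₂ - x₂ * x₁) ^ 2 * x₁ = 0 ∨
      (x₁ * x₂ - x₂ * x₁) ^ 2 * x₁ ≠ ((x₁ * x₂ - x₂ * x₁) ^ 2 * x₁).re := by
  by_cases hx : x₁ = x₁.re
  · left
    rw [hx, coe_mul_sub_mul_coe, sq, zero_mul, zero_mul]
  set c := x₁ * x₂ - x₂ * x₁
  have hp : c ^ 2 * x₁ = (-normSq c : R) • x₁ := by
    rw [mul_sub_mul_sq_eq_neg_normSq, ← coe_neg, coe_mul_eq_smul]
  by_cases hc : normSq c = 0
  · left
    rw [hp, hc, neg_zero, zero_smul]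
  · right
    intro hre
    apply hx
    refine eq_re_of_eq_coe (x := ((-normSq c)⁻¹ * (c ^ 2 * x₁).re : R)) ?_
    rw [← smul_coe, ← hre, hp, inv_smul_smul₀ (neg_ne_zero.2 hc)]

end LinearOrderedField

theorem exists_normSq_mul_sub_mul_eq_one {q : ℍ[ℝ]} (hq : q ≠ q.re) :
    ∃ u : ℍ[ℝ], normSq (q * u - u * q) = 1 := by
  obtain ⟨u, hu⟩ : ∃ u : ℍ[ℝ], q * u - u * q ≠ 0 := by
    by_contra! h
    exact hq (eq_re_of_forall_mul_comm fun u => sub_eq_zero.1 (h u))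
  refine ⟨‖q * u - u * q‖⁻¹ • u, ?_⟩
  rw [mul_smul_comm, smul_mul_assoc, ← smul_sub, normSq_eq_norm_mul_self, norm_smul,
    norm_inv, norm_norm, inv_mul_cancel₀ (norm_ne_zero_iff.2 hu), mul_one]

theorem exists_eq_mul_sub_mul_sq_mul {q : ℍ[ℝ]} (hq : q ≠ q.re) :
    ∃ x₁ x₂ : ℍ[ℝ], q = (x₁ * x₂ - x₂ * x₁) ^ 2 * x₁ := by
  obtain ⟨u, hu⟩ := exists_normSq_mul_sub_mul_eq_one hq
  refine ⟨-q, u, ?_⟩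
  have hneg : -q * u - u * -q = -(q * u - u * q) := by noncomm_ring
  rw [hneg, neg_sq, mul_sub_mul_sq_eq_neg_normSq, hu, coe_one, neg_mul_neg, one_mul]

end Quaternion

/-- The image of `p(x₁,x₂) = [x₁,x₂]²·x₁` on the real quaternions is the set
of all quaternions except the nonzero scalars; moreover `p` vanishes whenever
`x₁` is scalar. -/
theorem image_commutator_sq_mul_quaternion :
    {q : ℍ[ℝ] | ∃ x₁ x₂ : ℍ[ℝ], q = (x₁ * x₂ - x₂ * x₁) ^ 2 * x₁} =
      ({0} : Set ℍ[ℝ]) ∪ {q : ℍ[ℝ] | ∀ r : ℝ, q ≠ (r : ℍ[ℝ])} ∧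
    (∀ x₁ x₂ : ℍ[ℝ], (∃ r : ℝ, x₁ = (r : ℍ[ℝ])) →
      (x₁ * x₂ - x₂ * x₁) ^ 2 * x₁ = 0) := by
  refine ⟨Set.ext fun q => ⟨?_, ?_⟩, ?_⟩
  · rintro ⟨x₁, x₂, rfl⟩
    simpa only [Set.mem_union, Set.mem_singleton_iff, Set.mem_ofPred_eq,
      forall_ne_coe_iff_ne_re] using mul_sub_mul_sq_mul_eq_zero_or_ne_re x₁ x₂
  · rintro (rfl | hq)
    · exact ⟨0, 0, by simp⟩
    · exact exists_eq_mul_sub_mul_sq_mul (forall_ne_coe_iff_ne_re.1 hq)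
  · rintro x₁ x₂ ⟨r, rfl⟩
    rw [coe_mul_sub_mul_coe, sq, zero_mul, zero_mul]
end

section
/- Let G be the exterior (Grassmann) algebra over ℝ of a real vector space of dimension 4 with basis e₁, e₂, e₃, e₄, and let p(x,y) = xy − yx be evaluated on G. Then both e₁∧e₂ and e₃∧e₄ belong to Im p (indeed e₁∧e₂ = p((1/2)e₁, e₂)), but their sum e₁∧e₂ + e₃∧e₄ does not belong to Im p; in particular, Im p is not a vector subspace of G. -/
open ExteriorAlgebra CliffordAlgebra

section Lemmas

variable {M : Type*} [AddCommGroup M] [Module ℝ M]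

local notation "E" => ExteriorAlgebra ℝ M
local notation "eO" => CliffordAlgebra.evenOdd (0 : QuadraticForm ℝ M)
local notation "cι" => CliffordAlgebra.ι (0 : QuadraticForm ℝ M)

private lemma swap (a b : M) : cι a * cι b = -(cι b * cι a) :=
  eq_neg_of_add_eq_zero_left (ExteriorAlgebra.ι_add_mul_swap a b)

private lemma csq (a : M) : cι a * cι a = 0 := ExteriorAlgebra.ι_sq_zero a

private lemma pair_comm (a b : M) (z : E) :
    (cι a * cι b) * z = z * (cι a * cι b) := by
  induction z using CliffordAlgebra.induction with
  | algebraMap r => rw [Algebra.commutes]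
  | ι n =>
    rw [mul_assoc, swap b n, mul_neg, ← mul_assoc, swap a n, neg_mul, neg_neg, mul_assoc]
  | mul x y hx hy => rw [← mul_assoc, hx, mul_assoc, hy, ← mul_assoc]
  | add x y hx hy => rw [mul_add, add_mul, hx, hy]

private lemma ι_odd_comm (m : M) : ∀ y ∈ eO 1, cι m * y = -(y * cι m) := by
  intro y hy
  induction y, hy using CliffordAlgebra.odd_induction with
  | ι v => exact swap m v
  | add x y hx hy ihx ihy => rw [mul_add, add_mul, ihx, ihy, neg_add]
  | ι_mul_ι_mul a b x hx ih =>
    rw [← mul_assoc (cι m), ← pair_comm a b (cι m), mul_assoc (cι a * cι b), ih, mul_neg,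
      mul_assoc, mul_assoc, ← mul_assoc (cι a)]

private lemma odd_comm : ∀ x ∈ eO 1, ∀ y ∈ eO 1, x * y = -(y * x) := by
  intro x hx
  induction x, hx using CliffordAlgebra.odd_induction with
  | ι v => exact fun y hy => ι_odd_comm v y hy
  | add x y hx hy ihx ihy =>
    intro z hz
    rw [add_mul, mul_add, ihx z hz, ihy z hz, neg_add]
  | ι_mul_ι_mul a b x hx ih =>
    intro z hz
    rw [mul_assoc, ih z hz, mul_neg, ← mul_assoc z, ← pair_comm a b z,
      mul_assoc, mul_assoc, ← mul_assoc (cι a)]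

private lemma even_comm : ∀ x ∈ eO 0, ∀ z : E, x * z = z * x := by
  intro x hx
  induction x, hx using CliffordAlgebra.even_induction with
  | algebraMap r => exact fun z => Algebra.commutes r z
  | add x y hx hy ihx ihy => intro z; rw [add_mul, mul_add, ihx, ihy]
  | ι_mul_ι_mul a b x hx ih =>
    intro z
    rw [mul_assoc, ih z, ← mul_assoc z, ← pair_comm a b z, mul_assoc, mul_assoc,
      ← mul_assoc (cι a)]

private lemma decomp (x : E) : ∃ a ∈ eO 0, ∃ b ∈ eO 1, x = a + b := by
  induction x using CliffordAlgebra.induction with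
  | algebraMap r =>
    exact ⟨_, SetLike.algebraMap_mem_graded _ r, 0, Submodule.zero_mem _, (add_zero _).symm⟩
  | ι m => exact ⟨0, Submodule.zero_mem _, cι m, ι_mem_evenOdd_one _ m, (zero_add _).symm⟩
  | add x y hx hy =>
    obtain ⟨a, ha, b, hb, rfl⟩ := hx
    obtain ⟨c, hc, d, hd, rfl⟩ := hy
    exact ⟨a + c, Submodule.add_mem _ ha hc, b + d, Submodule.add_mem _ hb hd, by abel⟩
  | mul x y hx hy =>
    obtain ⟨a, ha, b, hb, rfl⟩ := hx
    obtain ⟨c, hc, d, hd, rfl⟩ := hy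
    refine ⟨a * c + b * d, Submodule.add_mem _ ?_ ?_, a * d + b * c, Submodule.add_mem _ ?_ ?_,
      by noncomm_ring⟩
    · exact (show (0 : ZMod 2) + 0 = 0 by decide) ▸ SetLike.mul_mem_graded ha hc
    · exact (show (1 : ZMod 2) + 1 = 0 by decide) ▸ SetLike.mul_mem_graded hb hd
    · exact (show (0 : ZMod 2) + 1 = 1 by decide) ▸ SetLike.mul_mem_graded ha hd
    · exact (show (1 : ZMod 2) + 0 = 1 by decide) ▸ SetLike.mul_mem_graded hb hc

private lemma odd_sq_zero {b : E} (hb : b ∈ eO 1) : b * b = 0 := by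
  have h := odd_comm b hb b hb
  have h2 : (2 : ℝ) • (b * b) = 0 := by
    rw [two_smul]
    nth_rewrite 1 [h]
    abel
  rcases smul_eq_zero.mp h2 with h' | h'
  · norm_num at h'
  · exact h'

/-- The square of any commutator in an exterior algebra over `ℝ` is zero. -/
theorem commutator_sq_zero (x y : E) : (x * y - y * x) * (x * y - y * x) = 0 := by
  obtain ⟨a, ha, b, hb, rfl⟩ := decomp x
  obtain ⟨c, hc, d, hd, rfl⟩ := decomp y
  have key : (a + b) * (c + d) - (c + d) * (a + b) = b * d + b * d := by
    have h1 : a * c = c * a := even_comm a ha c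
    have h2 : a * d = d * a := even_comm a ha d
    have h3 : c * b = b * c := even_comm c hc b
    have h4 : d * b = -(b * d) := odd_comm d hd b hb
    rw [add_mul, mul_add, mul_add, add_mul, mul_add, mul_add, h1, h2, h3, h4]
    abel
  rw [key]
  have hdb : d * b = -(b * d) := odd_comm d hd b hb
  have hbb : b * b = 0 := odd_sq_zero hb
  have hdd : d * d = 0 := odd_sq_zero hd
  have hz : b * d * (b * d) = 0 := by
    rw [show b * d * (b * d) = b * (d * b) * d by noncomm_ring, hdb, mul_neg, neg_mul,
      show b * (b * d) * d = b * b * d * d by noncomm_ring, hbb, zero_mul, zero_mul, neg_zero]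
  simp [mul_add, add_mul, hz]

end Lemmas

/-- The basis vectors `e₁, e₂, e₃, e₄` of the Grassmann algebra over a
4-dimensional real vector space, as elements of the exterior algebra. -/
noncomputable def grassE (t : Fin 4) : ExteriorAlgebra ℝ (Fin 4 → ℝ) :=
  ExteriorAlgebra.ι ℝ (Pi.single t 1)

/-- The image of the commutator `p(x,y) = xy - yx` on the Grassmann algebra. -/
def grassCommImage : Set (ExteriorAlgebra ℝ (Fin 4 → ℝ)) :=
  {q | ∃ x y : ExteriorAlgebra ℝ (Fin 4 → ℝ), q = x * y - y * x}

private noncomputable def detF : ∀ i : ℕ, (Fin 4 → ℝ) [⋀^Fin i]→ₗ[ℝ] ℝ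
  | 4 => Matrix.detRowAlternating
  | _ => 0

private lemma top_ne_zero :
    grassE 0 * grassE 1 * (grassE 2 * grassE 3) ≠ 0 := by
  intro h
  have hm : grassE 0 * grassE 1 * (grassE 2 * grassE 3) =
      ExteriorAlgebra.ιMulti ℝ 4 (fun i => Pi.single i 1) := by
    rw [ExteriorAlgebra.ιMulti_apply]
    simp only [List.ofFn_succ, List.ofFn_zero, List.prod_cons, List.prod_nil, mul_one,
      mul_assoc, grassE]
    rfl
  have := congrArg (ExteriorAlgebra.liftAlternating detF) hm.symm
  rw [h, map_zero, ExteriorAlgebra.liftAlternating_apply_ιMulti] at this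
  have hdet : detF 4 (fun i : Fin 4 => Pi.single i 1) = 1 := by
    show Matrix.detRowAlternating (fun i : Fin 4 => Pi.single i 1) = 1
    show Matrix.det (Matrix.of fun i : Fin 4 => Pi.single i (1 : ℝ)) = 1
    have hone : (Matrix.of fun i : Fin 4 => Pi.single i (1 : ℝ)) = 1 := by
      ext i j
      simp [Matrix.one_apply, Pi.single_apply, eq_comm]
    rw [hone, Matrix.det_one]
  rw [hdet] at this
  norm_num at this

private lemma omega_sq :
    (grassE 0 * grassE 1 + grassE 2 * grassE 3) * (grassE 0 * grassE 1 + grassE 2 * grassE 3)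
      = grassE 0 * grassE 1 * (grassE 2 * grassE 3)
        + grassE 0 * grassE 1 * (grassE 2 * grassE 3) := by
  have hsw : ∀ a b : Fin 4 → ℝ, ExteriorAlgebra.ι ℝ a * ExteriorAlgebra.ι ℝ b
      = -(ExteriorAlgebra.ι ℝ b * ExteriorAlgebra.ι ℝ a) :=
    fun a b => eq_neg_of_add_eq_zero_left (ExteriorAlgebra.ι_add_mul_swap a b)
  have sq02 : ∀ a b : Fin 4 → ℝ,
      (ExteriorAlgebra.ι ℝ a * ExteriorAlgebra.ι ℝ b) * (ExteriorAlgebra.ι ℝ a * ExteriorAlgebra.ι ℝ b) = 0 := by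
    intro a b
    rw [show (ExteriorAlgebra.ι ℝ a * ExteriorAlgebra.ι ℝ b) * (ExteriorAlgebra.ι ℝ a * ExteriorAlgebra.ι ℝ b)
        = ExteriorAlgebra.ι ℝ a * (ExteriorAlgebra.ι ℝ b * ExteriorAlgebra.ι ℝ a) * ExteriorAlgebra.ι ℝ b by noncomm_ring,
      hsw b a, mul_neg, neg_mul, show ExteriorAlgebra.ι ℝ a * (ExteriorAlgebra.ι ℝ a * ExteriorAlgebra.ι ℝ b) * ExteriorAlgebra.ι ℝ b
        = (ExteriorAlgebra.ι ℝ a * ExteriorAlgebra.ι ℝ a) * (ExteriorAlgebra.ι ℝ b * ExteriorAlgebra.ι ℝ b) by noncomm_ring,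
      ExteriorAlgebra.ι_sq_zero, zero_mul, neg_zero]
  have hcomm : grassE 2 * grassE 3 * (grassE 0 * grassE 1)
      = grassE 0 * grassE 1 * (grassE 2 * grassE 3) := by
    exact pair_comm (Pi.single 2 1) (Pi.single 3 1) (grassE 0 * grassE 1)
  simp only [grassE] at hcomm ⊢
  rw [add_mul, mul_add, mul_add, sq02, sq02, hcomm]
  abel

/-- On the 4-dimensional Grassmann algebra, `e₁∧e₂` and `e₃∧e₄` are values of
the commutator polynomial `p(x,y) = xy - yx` (indeed
`e₁∧e₂ = p((1/2)e₁, e₂)`), but `e₁∧e₂ + e₃∧e₄` is not; hence the image of `p`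
is not a vector subspace. -/
theorem grassmann_commutator_image_not_subspace :
    grassE 0 * grassE 1 =
      ((1 / 2 : ℝ) • grassE 0) * grassE 1 - grassE 1 * ((1 / 2 : ℝ) • grassE 0) ∧
    grassE 0 * grassE 1 ∈ grassCommImage ∧
    grassE 2 * grassE 3 ∈ grassCommImage ∧
    grassE 0 * grassE 1 + grassE 2 * grassE 3 ∉ grassCommImage ∧
    ¬ ∃ W : Submodule ℝ (ExteriorAlgebra ℝ (Fin 4 → ℝ)),
        (W : Set (ExteriorAlgebra ℝ (Fin 4 → ℝ))) = grassCommImage := by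
  have hsw : ∀ a b : Fin 4 → ℝ, ExteriorAlgebra.ι ℝ a * ExteriorAlgebra.ι ℝ b
      = -(ExteriorAlgebra.ι ℝ b * ExteriorAlgebra.ι ℝ a) :=
    fun a b => eq_neg_of_add_eq_zero_left (ExteriorAlgebra.ι_add_mul_swap a b)
  have h1 : grassE 0 * grassE 1 =
      ((1 / 2 : ℝ) • grassE 0) * grassE 1 - grassE 1 * ((1 / 2 : ℝ) • grassE 0) := by
    rw [smul_mul_assoc, mul_smul_comm, show grassE 1 * grassE 0 = -(grassE 0 * grassE 1) from
      hsw (Pi.single 1 1) (Pi.single 0 1)]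
    module
  have h1' : grassE 2 * grassE 3 =
      ((1 / 2 : ℝ) • grassE 2) * grassE 3 - grassE 3 * ((1 / 2 : ℝ) • grassE 2) := by
    rw [smul_mul_assoc, mul_smul_comm, show grassE 3 * grassE 2 = -(grassE 2 * grassE 3) from
      hsw (Pi.single 3 1) (Pi.single 2 1)]
    module
  have h4 : grassE 0 * grassE 1 + grassE 2 * grassE 3 ∉ grassCommImage := by
    rintro ⟨x, y, hxy⟩
    have hz := commutator_sq_zero x y
    rw [← hxy, omega_sq] at hz
    have := top_ne_zero
    have h2 : (2 : ℝ) • (grassE 0 * grassE 1 * (grassE 2 * grassE 3)) = 0 := by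
      rw [two_smul]; exact hz
    rcases smul_eq_zero.mp h2 with h' | h'
    · norm_num at h'
    · exact top_ne_zero h'
  refine ⟨h1, ⟨_, _, h1⟩, ⟨_, _, h1'⟩, h4, ?_⟩
  rintro ⟨W, hW⟩
  apply h4
  rw [← hW]
  have m1 : grassE 0 * grassE 1 ∈ W := by rw [← SetLike.mem_coe, hW]; exact ⟨_, _, h1⟩
  have m2 : grassE 2 * grassE 3 ∈ W := by rw [← SetLike.mem_coe, hW]; exact ⟨_, _, h1'⟩
  exact W.add_mem m1 m2
end
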